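/- arXiv:1111.5057 — 5 statements merged into one kernel-verified Lean document; each statement's English description precedes it below -/
import Mathlib

section
/- Let ρ be an N×N positive semidefinite complex matrix with trace 1 (a density matrix), and let Z₁,…,Z_m be Hermitian N×N complex matrices. Define the means d_i = Tr(ρ Z_i) (which are real), the centered matrices Ẑ_i = Z_i − d_i·I, the real symmetric m×m matrix γ with entries γ_{ij} = Tr(ρ(Ẑ_i Ẑ_j + Ẑ_j Ẑ_i)), and the real antisymmetric m×m matrix C with entries C_{ij} = −i·Tr(ρ(Ẑ_i Ẑ_j − Ẑ_j Ẑ_i)). Then the Hermitian m×m matrix γ + iC is positive semidefinite. -/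
/-!
Since `ẐᵢẐⱼ + ẐⱼẐᵢ + (ẐᵢẐⱼ - ẐⱼẐᵢ) = 2 ẐᵢẐⱼ`, the matrix `γ + iC` is twice the matrix
`(Tr(ρ Ẑᵢ Ẑⱼ))ᵢⱼ`. For Hermitian `Ẑᵢ` this is the Gram matrix of the `Ẑᵢ` for the semi-inner
product `⟪X, Y⟫ = Tr(Y ρ Xᴴ)` induced by `ρ ≥ 0`, hence positive semidefinite.
-/

open scoped ComplexOrder MatrixOrder
open Matrix

namespace Matrix

variable {𝕜 ι n : Type*} [RCLike 𝕜] [Fintype n]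

theorem PosSemidef.posSemidef_trace_mul_mul [Finite ι] {ρ : Matrix n n 𝕜} (hρ : ρ.PosSemidef)
    {X : ι → Matrix n n 𝕜} (hX : ∀ i, (X i).IsHermitian) :
    (of fun i j => (ρ * (X i * X j)).trace).PosSemidef := by
  let := ρ.toMatrixSeminormedAddCommGroup hρ
  let := ρ.toMatrixInnerProductSpace hρ
  convert posSemidef_gram 𝕜 X using 1
  ext i j
  change _ = (X j * ρ * (X i)ᴴ).trace
  rw [of_apply, (hX i).eq, trace_mul_cycle, trace_mul_comm]

end Matrix

theorem uncertainty_relation_matrix_form_general {N m : ℕ}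
    (ρ : Matrix (Fin N) (Fin N) ℂ) (hρ : ρ.PosSemidef)
    (Z : Fin m → Matrix (Fin N) (Fin N) ℂ) (hZ : ∀ i, (Z i).IsHermitian)
    (d : Fin m → ℝ)
    (Zc : Fin m → Matrix (Fin N) (Fin N) ℂ)
    (hZc : ∀ i, Zc i = Z i - (d i : ℂ) • (1 : Matrix (Fin N) (Fin N) ℂ))
    (γ C : Matrix (Fin m) (Fin m) ℝ)
    (hγ : ∀ i j, (γ i j : ℂ) = (ρ * (Zc i * Zc j + Zc j * Zc i)).trace)
    (hC : ∀ i j, (C i j : ℂ) = -Complex.I * (ρ * (Zc i * Zc j - Zc j * Zc i)).trace) :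
    (γ.map Complex.ofReal + Complex.I • C.map Complex.ofReal).PosSemidef := by
  have hZcH : ∀ i, (Zc i).IsHermitian := fun i => by
    rw [hZc, IsHermitian, conjTranspose_sub, conjTranspose_smul, conjTranspose_one,
      Complex.star_def, Complex.conj_ofReal, (hZ i).eq]
  have hM : γ.map Complex.ofReal + Complex.I • C.map Complex.ofReal =
      (2 : ℂ) • of fun i j => (ρ * (Zc i * Zc j)).trace := by
    ext i j
    simp only [Matrix.add_apply, Matrix.smul_apply, map_apply, of_apply, smul_eq_mul, hγ, hC, mul_add,
      mul_sub, trace_add, trace_sub]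
    linear_combination ((ρ * (Zc j * Zc i)).trace - (ρ * (Zc i * Zc j)).trace) * Complex.I_sq
  rw [hM]
  exact (hρ.posSemidef_trace_mul_mul hZcH).smul zero_le_two

/-- Robertson–Schrödinger uncertainty relation in matrix form: for a density matrix ρ
and Hermitian observables Z₁,…,Z_m, the matrix γ + iC is positive semidefinite, where
γ is the (real, symmetric) covariance matrix and C the (real, antisymmetric) commutator
matrix of the centered observables. -/
theorem uncertainty_relation_matrix_form {N m : ℕ}
    (ρ : Matrix (Fin N) (Fin N) ℂ) (hρ : ρ.PosSemidef) (hρtr : ρ.trace = 1)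
    (Z : Fin m → Matrix (Fin N) (Fin N) ℂ) (hZ : ∀ i, (Z i).IsHermitian)
    (d : Fin m → ℝ) (hd : ∀ i, (d i : ℂ) = (ρ * Z i).trace)
    (Zc : Fin m → Matrix (Fin N) (Fin N) ℂ)
    (hZc : ∀ i, Zc i = Z i - (d i : ℂ) • (1 : Matrix (Fin N) (Fin N) ℂ))
    (γ C : Matrix (Fin m) (Fin m) ℝ)
    (hγ : ∀ i j, (γ i j : ℂ) = (ρ * (Zc i * Zc j + Zc j * Zc i)).trace)
    (hC : ∀ i j, (C i j : ℂ) = -Complex.I * (ρ * (Zc i * Zc j - Zc j * Zc i)).trace) :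
    (γ.map Complex.ofReal + Complex.I • C.map Complex.ofReal).PosSemidef :=
  uncertainty_relation_matrix_form_general ρ hρ Z hZ d Zc hZc γ C hγ hC
end

section
/- Let Σ_A and Σ_B be the standard symplectic form matrices of sizes 2n×2n and 2m×2m respectively, and let λ > 0. Let γ_AB = [[γ_A, X],[Xᵀ, γ_B]] be a real symmetric block matrix with γ_AB + iλ·diag(Σ_A, Σ_B) positive semidefinite, and let γ'_A be a real symmetric 2n×2n matrix with γ'_A + iλΣ_A positive semidefinite. Assume additionally that γ'_A + γ_A is invertible. Then the matrix γ'_B := γ_B − Xᵀ(γ'_A + γ_A)^{−1}X satisfies: γ'_B + iλΣ_B is positive semidefinite. -/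
open Matrix
open scoped ComplexOrder

/-- The standard 2n×2n symplectic form matrix: block diagonal with n blocks
[[0,-1],[1,0]]. -/
def stdSymp (n : ℕ) : Matrix (Fin (2 * n)) (Fin (2 * n)) ℝ :=
  Matrix.of fun i j =>
    if (j : ℕ) = (i : ℕ) + 1 ∧ (i : ℕ) % 2 = 0 then -1
    else if (i : ℕ) = (j : ℕ) + 1 ∧ (j : ℕ) % 2 = 0 then 1
    else 0

/-!
Transposing (equivalently, complex-conjugating) the CUP for `γ'_A` gives
`γ'_A - iλΣ_A ≥ 0`. Adding this to the `A`-block of `γ_AB + iλΣ_AB ≥ 0` cancels the symplectic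
term there, so `[[γ'_A + γ_A, X], [Xᵀ, γ_B + iλΣ_B]] ≥ 0`. Its `A`-block is positive
semidefinite and invertible, hence positive definite, and the Schur complement of a positive
definite block of a positive semidefinite matrix is positive semidefinite; here that Schur
complement is `γ'_B + iλΣ_B`.
-/

namespace Matrix

variable {m n : Type*}

theorem map_nonsing_inv_of_isUnit [Fintype n] [DecidableEq n] {α β : Type*} [CommRing α]
    [CommRing β] (f : α →+* β) {A : Matrix n n α} (hA : IsUnit A) :
    A⁻¹.map f = (A.map f)⁻¹ := by
  refine (inv_eq_right_inv ?_).symm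
  rw [← RingHom.mapMatrix_apply, ← RingHom.mapMatrix_apply, ← map_mul,
    mul_nonsing_inv _ ((isUnit_iff_isUnit_det A).mp hA), map_one]

theorem map_ofReal_mul {l : Type*} [Fintype m] (M : Matrix l m ℝ) (N : Matrix m n ℝ) :
    (M * N).map Complex.ofReal = M.map Complex.ofReal * N.map Complex.ofReal :=
  Matrix.map_mul (f := Complex.ofRealHom)

theorem conjTranspose_map_ofReal (M : Matrix m n ℝ) :
    (M.map Complex.ofReal)ᴴ = Mᵀ.map Complex.ofReal := by
  ext
  simp [conjTranspose_apply]

theorem PosSemidef.sub_smul_of_add_smul [Fintype n] {R : Type*} [CommRing R] [PartialOrder R]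
    [StarRing R] {A S : Matrix n n R} {c : R} (h : (A + c • S).PosSemidef) (hA : Aᵀ = A)
    (hS : Sᵀ = -S) : (A - c • S).PosSemidef := by
  simpa [hA, hS, sub_eq_add_neg] using h.transpose

theorem PosSemidef.fromBlocks_zero [Fintype m] [Fintype n] [DecidableEq m] {R : Type*} [Ring R]
    [PartialOrder R] [StarRing R] {A : Matrix m m R} (hA : A.PosSemidef) :
    (fromBlocks A 0 0 (0 : Matrix n n R)).PosSemidef := by
  have h := hA.conjTranspose_mul_mul_same (fromCols (1 : Matrix m m R) (0 : Matrix m n R))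
  rw [conjTranspose_fromCols_eq_fromRows_conjTranspose, fromRows_mul, fromRows_mul_fromCols] at h
  simpa using h

theorem PosSemidef.schur_complement₁₁_of_isUnit {𝕜 : Type*} [RCLike 𝕜] [Fintype m] [Fintype n]
    [DecidableEq m] {A : Matrix m m 𝕜} {B : Matrix m n 𝕜} {D : Matrix n n 𝕜}
    (h : (fromBlocks A B Bᴴ D).PosSemidef) (hA : IsUnit A) :
    (D - Bᴴ * A⁻¹ * B).PosSemidef := by
  have hApos : A.PosDef := (h.submatrix Sum.inl : A.PosSemidef).posDef_iff_isUnit.mpr hA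
  have := hA.invertible
  exact (PosDef.fromBlocks₁₁ B D hApos).mp h

end Matrix

theorem stdSymp_transpose (k : ℕ) : (stdSymp k)ᵀ = -stdSymp k := by
  ext i j
  simp only [stdSymp, transpose_apply, of_apply, Matrix.neg_apply]
  split_ifs <;> first | omega | norm_num

theorem measurement_update_preserves_CUP_general {n m : ℕ} (lam : ℝ)
    (γA γ'A : Matrix (Fin (2 * n)) (Fin (2 * n)) ℝ)
    (γB : Matrix (Fin (2 * m)) (Fin (2 * m)) ℝ)
    (X : Matrix (Fin (2 * n)) (Fin (2 * m)) ℝ)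
    (hA' : γ'A.IsSymm)
    (hAB : ((Matrix.fromBlocks γA X Xᵀ γB).map Complex.ofReal +
        (Complex.I * (lam : ℂ)) •
          (Matrix.fromBlocks (stdSymp n) 0 0 (stdSymp m)).map Complex.ofReal).PosSemidef)
    (hA'cup : (γ'A.map Complex.ofReal +
        (Complex.I * (lam : ℂ)) • (stdSymp n).map Complex.ofReal).PosSemidef)
    (hinv : IsUnit (γ'A + γA)) :
    ((γB - Xᵀ * (γ'A + γA)⁻¹ * X).map Complex.ofReal +
        (Complex.I * (lam : ℂ)) • (stdSymp m).map Complex.ofReal).PosSemidef := by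
  set c : ℂ := Complex.I * (lam : ℂ)
  have hA'conj : (γ'A.map Complex.ofReal - c • (stdSymp n).map Complex.ofReal).PosSemidef :=
    hA'cup.sub_smul_of_add_smul (by rw [← transpose_map, hA'.eq])
      (by rw [← transpose_map, stdSymp_transpose]; exact Matrix.map_neg _ Complex.ofReal_neg _)
  have hjoint : (fromBlocks ((γ'A + γA).map Complex.ofReal) (X.map Complex.ofReal)
      (X.map Complex.ofReal)ᴴ
      (γB.map Complex.ofReal + c • (stdSymp m).map Complex.ofReal)).PosSemidef := by
    convert hAB.add hA'conj.fromBlocks_zero using 1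
    simp only [fromBlocks_map, fromBlocks_smul, fromBlocks_add, conjTranspose_map_ofReal]
    congr 1 <;> simp [Matrix.map_add _ Complex.ofReal_add, add_comm]
  have hschur := hjoint.schur_complement₁₁_of_isUnit (hinv.map Complex.ofRealHom.mapMatrix)
  have hinv_map : (γ'A + γA)⁻¹.map Complex.ofReal = ((γ'A + γA).map Complex.ofReal)⁻¹ :=
    map_nonsing_inv_of_isUnit Complex.ofRealHom hinv
  have hupdate : (γB - Xᵀ * (γ'A + γA)⁻¹ * X).map Complex.ofReal +
        c • (stdSymp m).map Complex.ofReal =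
      γB.map Complex.ofReal + c • (stdSymp m).map Complex.ofReal -
        (X.map Complex.ofReal)ᴴ * ((γ'A + γA).map Complex.ofReal)⁻¹ * X.map Complex.ofReal := by
    rw [← hinv_map, conjTranspose_map_ofReal, Matrix.map_sub _ Complex.ofReal_sub,
      map_ofReal_mul, map_ofReal_mul]
    abel
  rwa [hupdate]

/-- Gaussian measurement updates preserve the classical uncertainty principle: if the
bipartite covariance matrix [[γA, X],[Xᵀ, γB]] satisfies the CUP, and the indicator
function covariance matrix γ'A satisfies the CUP, then the Schur complement
γ'B = γB − Xᵀ(γ'A + γA)⁻¹X also satisfies the CUP. -/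
theorem measurement_update_preserves_CUP {n m : ℕ} (lam : ℝ) (hlam : 0 < lam)
    (γA γ'A : Matrix (Fin (2 * n)) (Fin (2 * n)) ℝ)
    (γB : Matrix (Fin (2 * m)) (Fin (2 * m)) ℝ)
    (X : Matrix (Fin (2 * n)) (Fin (2 * m)) ℝ)
    (hA : γA.IsSymm) (hB : γB.IsSymm) (hA' : γ'A.IsSymm)
    (hAB : ((Matrix.fromBlocks γA X Xᵀ γB).map Complex.ofReal +
        (Complex.I * (lam : ℂ)) •
          (Matrix.fromBlocks (stdSymp n) 0 0 (stdSymp m)).map Complex.ofReal).PosSemidef)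
    (hA'cup : (γ'A.map Complex.ofReal +
        (Complex.I * (lam : ℂ)) • (stdSymp n).map Complex.ofReal).PosSemidef)
    (hinv : IsUnit (γ'A + γA)) :
    ((γB - Xᵀ * (γ'A + γA)⁻¹ * X).map Complex.ofReal +
        (Complex.I * (lam : ℂ)) • (stdSymp m).map Complex.ofReal).PosSemidef :=
  measurement_update_preserves_CUP_general lam γA γ'A γB X hA' hAB hA'cup hinv
end

section
/- Let λ > 0 and r ∈ ℝ, and for a system of n degrees of freedom define the diagonal 2n×2n real matrices D₊(r) = cosh(2r)·diag(1, λ², 1, λ², …) and D₋(r) = sinh(2r)·diag(1, −λ², 1, −λ², …), and let Σ be the standard 2n×2n symplectic form matrix. Then for every r, the Hermitian matrix [[D₊(r), D₋(r)],[D₋(r), D₊(r)]] + iλ·diag(Σ, Σ) is positive semidefinite. -/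
open Matrix
open scoped ComplexOrder

/-- D₊(r) = cosh(2r)·diag(1, λ², 1, λ², …). -/
noncomputable def Dplus (n : ℕ) (lam r : ℝ) : Matrix (Fin (2 * n)) (Fin (2 * n)) ℝ :=
  Real.cosh (2 * r) • Matrix.diagonal (fun i : Fin (2 * n) => if (i : ℕ) % 2 = 0 then 1 else lam ^ 2)

/-- D₋(r) = sinh(2r)·diag(1, −λ², 1, −λ², …). -/
noncomputable def Dminus (n : ℕ) (lam r : ℝ) : Matrix (Fin (2 * n)) (Fin (2 * n)) ℝ :=
  Real.sinh (2 * r) • Matrix.diagonal (fun i : Fin (2 * n) => if (i : ℕ) % 2 = 0 then 1 else -lam ^ 2)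

/-!
With `S(a) = diag(a, λ²/a, a, λ²/a, …)` one has `D₊(r) = ½(S(e^{2r}) + S(e^{-2r}))` and
`D₋(r) = ½(S(e^{2r}) - S(e^{-2r}))`, so the matrix in question is
`[[X + Y, X - Y], [X - Y, X + Y]]` with `X, Y = ½(S(e^{±2r}) + iλΣ)`. Such a block matrix is
congruent to `diag(X, Y)` via `[[1, 1], [1, -1]]`, so it suffices that `S(a) + iλΣ` is positive
semidefinite for `a > 0`. That matrix is a direct sum of the rank-one blocks
`[[a, -iλ], [iλ, λ²/a]] = k* k` with `k = (i√a, λ/√a)`.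
-/

theorem Matrix.PosSemidef.fromBlocks_add_sub {R n : Type*} [Ring R] [PartialOrder R] [StarRing R]
    [AddLeftMono R] [Fintype n] [DecidableEq n] {X Y : Matrix n n R}
    (hX : X.PosSemidef) (hY : Y.PosSemidef) :
    (fromBlocks (X + Y) (X - Y) (X - Y) (X + Y)).PosSemidef := by
  have hXY := (hX.conjTranspose_mul_mul_same (fromCols 1 1 : Matrix n (n ⊕ n) R)).add
    (hY.conjTranspose_mul_mul_same (fromCols 1 (-1) : Matrix n (n ⊕ n) R))
  convert hXY using 1
  simp [conjTranspose_fromCols_eq_fromRows_conjTranspose, fromBlocks_add, sub_eq_add_neg]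

section Parity

variable {α : Type*} (n : ℕ)

def evenProj [Zero α] [One α] : Matrix (Fin (2 * n)) (Fin (2 * n)) α :=
  diagonal fun i => if (i : ℕ) % 2 = 0 then 1 else 0

def oddProj [Zero α] [One α] : Matrix (Fin (2 * n)) (Fin (2 * n)) α :=
  diagonal fun i => if (i : ℕ) % 2 = 0 then 0 else 1

def pairShift [Zero α] [One α] : Matrix (Fin (2 * n)) (Fin (2 * n)) α :=
  of fun i j => if (i : ℕ) = (j : ℕ) + 1 ∧ (j : ℕ) % 2 = 0 then 1 else 0

variable {n}

theorem conjTranspose_oddProj [Semiring α] [StarRing α] :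
    (oddProj n : Matrix _ _ α)ᴴ = oddProj n := by
  rw [oddProj, diagonal_conjTranspose]
  congr 1; ext i; simp only [Pi.star_apply, apply_ite star, star_one, star_zero]

theorem conjTranspose_pairShift [Semiring α] [StarRing α] :
    (pairShift n : Matrix _ _ α)ᴴ = (pairShift n)ᵀ := by
  ext i j
  simp only [pairShift, conjTranspose_apply, transpose_apply, of_apply, apply_ite star, star_one,
    star_zero]

theorem oddProj_mul_oddProj [NonAssocSemiring α] :
    (oddProj n : Matrix _ _ α) * oddProj n = oddProj n := by
  rw [oddProj, diagonal_mul_diagonal]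
  congr 1; ext i; split_ifs <;> simp

theorem oddProj_mul_pairShift [NonAssocSemiring α] :
    (oddProj n : Matrix _ _ α) * pairShift n = pairShift n := by
  ext i j
  simp only [oddProj, pairShift, diagonal_mul, of_apply]
  by_cases h : (i : ℕ) = j + 1 ∧ (j : ℕ) % 2 = 0
  · rw [if_pos h, if_neg (show ¬(i : ℕ) % 2 = 0 by omega), one_mul]
  · simp [h]

theorem pairShift_transpose_mul_oddProj [NonAssocSemiring α] :
    (pairShift n)ᵀ * (oddProj n : Matrix _ _ α) = (pairShift n)ᵀ := by
  ext i j
  simp only [oddProj, pairShift, mul_diagonal, transpose_apply, of_apply]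
  by_cases h : (j : ℕ) = i + 1 ∧ (i : ℕ) % 2 = 0
  · rw [if_pos h, if_neg (show ¬(j : ℕ) % 2 = 0 by omega), mul_one]
  · simp [h]

theorem pairShift_transpose_mul_pairShift [NonAssocSemiring α] :
    (pairShift n)ᵀ * pairShift n = (evenProj n : Matrix _ _ α) := by
  ext i j
  rw [mul_apply]
  by_cases hi : (i : ℕ) % 2 = 0
  · rw [Finset.sum_eq_single ⟨i + 1, by have := i.isLt; omega⟩]
    · simp only [pairShift, evenProj, transpose_apply, of_apply, diagonal_apply, Fin.ext_iff,
        Nat.add_right_cancel_iff, true_and, hi, if_true, one_mul]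
      split_ifs <;> first | rfl | omega
    · intro k _ hk
      simp [pairShift, Fin.ext_iff.not.mp hk]
    · simp
  · simp [pairShift, evenProj, hi, diagonal_apply]

theorem conjTranspose_mul_self_smul_oddProj_add_smul_pairShift [CommRing α] [StarRing α]
    (b c : α) :
    (b • oddProj n + c • pairShift n : Matrix (Fin (2 * n)) (Fin (2 * n)) α)ᴴ *
        (b • oddProj n + c • pairShift n) =
      (star c * c) • evenProj n + (star b * b) • oddProj n + (c * star b) • pairShift n +
        (star c * b) • (pairShift n)ᵀ := by
  simp only [conjTranspose_add, conjTranspose_smul, conjTranspose_oddProj, conjTranspose_pairShift,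
    add_mul, mul_add, smul_mul_smul_comm, oddProj_mul_oddProj, oddProj_mul_pairShift,
    pairShift_transpose_mul_oddProj, pairShift_transpose_mul_pairShift]
  module

end Parity

theorem stdSymp_map_ofReal (n : ℕ) :
    (stdSymp n).map Complex.ofReal = pairShift n - (pairShift n)ᵀ := by
  ext i j
  simp only [map_apply, stdSymp, pairShift, Matrix.sub_apply, transpose_apply, of_apply]
  by_cases h₁ : (j : ℕ) = i + 1 ∧ (i : ℕ) % 2 = 0
  · have h₂ : ¬((i : ℕ) = j + 1 ∧ (j : ℕ) % 2 = 0) := by omega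
    simp only [if_pos h₁, if_neg h₂]
    norm_num
  · by_cases h₂ : (i : ℕ) = j + 1 ∧ (j : ℕ) % 2 = 0
    · simp only [if_pos h₂, if_neg h₁]
      norm_num
    · simp only [if_neg h₁, if_neg h₂]
      norm_num

open Complex

noncomputable def squeezedCov (n : ℕ) (lam a : ℝ) : Matrix (Fin (2 * n)) (Fin (2 * n)) ℂ :=
  (a : ℂ) • evenProj n + ((lam : ℂ) ^ 2 / a) • oddProj n

theorem posSemidef_squeezedCov_add_I_smul_stdSymp (n : ℕ) (lam : ℝ) {a : ℝ} (ha : 0 < a) :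
    (squeezedCov n lam a + (I * lam) • (stdSymp n).map ofReal).PosSemidef := by
  have hu2 : (√a : ℂ) ^ 2 = a := by rw [← ofReal_pow, Real.sq_sqrt ha.le]
  have hK := posSemidef_conjTranspose_mul_self
    ((lam / √a : ℂ) • oddProj n + (I * √a) • pairShift n : Matrix (Fin (2 * n)) _ ℂ)
  rw [conjTranspose_mul_self_smul_oddProj_add_smul_pairShift] at hK
  convert hK using 1
  rw [squeezedCov, stdSymp_map_ofReal]
  match_scalars <;> simp only [star_def, map_mul, map_div₀, conj_ofReal, conj_I] <;>
    field_simp <;> simp [hu2]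

theorem map_ofReal_Dplus (n : ℕ) (lam r : ℝ) :
    (Dplus n lam r).map ofReal =
      (1 / 2 : ℂ) •
        (squeezedCov n lam (Real.exp (2 * r)) + squeezedCov n lam (Real.exp (-(2 * r)))) := by
  ext i j
  simp only [Dplus, squeezedCov, evenProj, oddProj, map_apply, Matrix.add_apply, Matrix.smul_apply,
    diagonal_apply, smul_eq_mul, mul_ite, mul_one, mul_zero, one_div, ofReal_exp, ofReal_mul,
    ofReal_ofNat, ofReal_neg]
  split_ifs <;> push_cast [Complex.cosh, Complex.exp_neg] <;> field_simp <;> ring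

theorem map_ofReal_Dminus (n : ℕ) (lam r : ℝ) :
    (Dminus n lam r).map ofReal =
      (1 / 2 : ℂ) •
        (squeezedCov n lam (Real.exp (2 * r)) - squeezedCov n lam (Real.exp (-(2 * r)))) := by
  ext i j
  simp only [Dminus, squeezedCov, evenProj, oddProj, map_apply, Matrix.sub_apply, Matrix.add_apply,
    Matrix.smul_apply, diagonal_apply, smul_eq_mul, mul_ite, mul_one, mul_neg, mul_zero, one_div,
    ofReal_exp, ofReal_mul, ofReal_ofNat, ofReal_neg]
  split_ifs <;> push_cast [Complex.sinh, Complex.exp_neg] <;> field_simp <;> ring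

theorem squeezed_EPR_satisfies_CUP_general {n : ℕ} (lam r : ℝ) :
    ((Matrix.fromBlocks (Dplus n lam r) (Dminus n lam r)
          (Dminus n lam r) (Dplus n lam r)).map Complex.ofReal +
        (Complex.I * (lam : ℂ)) •
          (Matrix.fromBlocks (stdSymp n) 0 0 (stdSymp n)).map Complex.ofReal).PosSemidef := by
  have hhalf : (0 : ℂ) ≤ 1 / 2 := by norm_num [Complex.le_def]
  have hX := (posSemidef_squeezedCov_add_I_smul_stdSymp n lam (Real.exp_pos (2 * r))).smul hhalf
  have hY := (posSemidef_squeezedCov_add_I_smul_stdSymp n lam (Real.exp_pos (-(2 * r)))).smul hhalf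
  convert hX.fromBlocks_add_sub hY using 1
  rw [fromBlocks_map, fromBlocks_map, fromBlocks_smul, fromBlocks_add, map_ofReal_Dplus,
    map_ofReal_Dminus]
  simp only [Matrix.map_zero _ ofReal_zero, smul_zero, add_zero]
  congr 1 <;> module

/-- The covariance matrix [[D₊(r), D₋(r)],[D₋(r), D₊(r)]] of the finitely-squeezed
approximation of the perfectly correlated (EPR) epistemic state satisfies the classical
uncertainty principle for every squeezing parameter r. -/
theorem squeezed_EPR_satisfies_CUP {n : ℕ} (lam r : ℝ) (hlam : 0 < lam) :
    ((Matrix.fromBlocks (Dplus n lam r) (Dminus n lam r)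
          (Dminus n lam r) (Dplus n lam r)).map Complex.ofReal +
        (Complex.I * (lam : ℂ)) •
          (Matrix.fromBlocks (stdSymp n) 0 0 (stdSymp n)).map Complex.ofReal).PosSemidef :=
  squeezed_EPR_satisfies_CUP_general lam r
end

section
/- Let λ > 0 and r ∈ ℝ with r ≠ 0, and for a system of n degrees of freedom define the diagonal 2n×2n real matrices D₊(r) = cosh(2r)·diag(1, λ², 1, λ², …) and D₋(r) = sinh(2r)·diag(1, −λ², 1, −λ², …), and let Σ be the standard 2n×2n symplectic form matrix. Then the complex matrix D₊(r) + iλΣ is invertible, and D₊(r) − D₋(r)·(D₊(r) + iλΣ)^{−1}·D₋(r) = −iλΣ. -/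
open Matrix

/-!
Σ, D₊(r) and D₋(r) are block diagonal with n copies of the same 2 × 2 block, so the identity
reduces to one for 2 × 2 matrices. There M = c·diag(1, λ²) + iλJ (c = cosh 2r, s = sinh 2r)
has determinant λ²(c² − 1) = λ²s², and conjugating its adjugate by diag(1, −λ²) gives back
λ²M, whence D₋M⁻¹D₋ = M and D₊ − D₋M⁻¹D₋ = −iλJ.
-/

def finTwoProdEquiv (n : ℕ) : Fin 2 × Fin n ≃ Fin (2 * n) :=
  (Equiv.prodComm _ _).trans (finProdFinEquiv.trans (finCongr (Nat.mul_comm n 2)))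

@[simp]
theorem finTwoProdEquiv_apply_val {n : ℕ} (a : Fin 2) (k : Fin n) :
    (finTwoProdEquiv n (a, k) : ℕ) = a + 2 * k := rfl

def blockRepeat (n : ℕ) (R : Type*) [Semiring R] :
    Matrix (Fin 2) (Fin 2) R →+* Matrix (Fin (2 * n)) (Fin (2 * n)) R :=
  ((reindexRingEquiv R (finTwoProdEquiv n)).toRingHom.comp
    (blockDiagonalRingHom (Fin 2) (Fin n) R)).comp (Pi.constRingHom (Fin n) _)

section BlockRepeat

variable {n : ℕ} {R : Type*} [Semiring R]

theorem blockRepeat_apply (B : Matrix (Fin 2) (Fin 2) R) (a b : Fin 2) (k l : Fin n) :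
    blockRepeat n R B (finTwoProdEquiv n (a, k)) (finTwoProdEquiv n (b, l)) =
      if k = l then B a b else 0 := by
  simp [blockRepeat, blockDiagonal_apply']

theorem eq_blockRepeat {A : Matrix (Fin (2 * n)) (Fin (2 * n)) R}
    {B : Matrix (Fin 2) (Fin 2) R}
    (h : ∀ a b k l, A (finTwoProdEquiv n (a, k)) (finTwoProdEquiv n (b, l)) =
      if k = l then B a b else 0) :
    A = blockRepeat n R B := by
  ext i j
  obtain ⟨⟨a, k⟩, rfl⟩ := (finTwoProdEquiv n).surjective i
  obtain ⟨⟨b, l⟩, rfl⟩ := (finTwoProdEquiv n).surjective j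
  rw [h, blockRepeat_apply]

theorem blockRepeat_smul (c : R) (B : Matrix (Fin 2) (Fin 2) R) :
    blockRepeat n R (c • B) = c • blockRepeat n R B :=
  (eq_blockRepeat fun a b k l => by simp [blockRepeat_apply]).symm

theorem blockRepeat_map {S : Type*} [Semiring S] (B : Matrix (Fin 2) (Fin 2) R) {f : R → S}
    (hf : f 0 = 0) : (blockRepeat n R B).map f = blockRepeat n S (B.map f) :=
  eq_blockRepeat fun a b k l => by simp [blockRepeat_apply, apply_ite f, hf]

theorem diagonal_parity_eq_blockRepeat (x y : R) :
    diagonal (fun i : Fin (2 * n) => if (i : ℕ) % 2 = 0 then x else y) =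
      blockRepeat n R !![x, 0; 0, y] :=
  eq_blockRepeat fun a b k l => by
    fin_cases a <;> fin_cases b <;> simp [diagonal_apply, Fin.ext_iff]

end BlockRepeat

theorem blockRepeat_nonsing_inv {n : ℕ} {K : Type*} [CommRing K]
    {B : Matrix (Fin 2) (Fin 2) K} (hB : IsUnit B) :
    (blockRepeat n K B)⁻¹ = blockRepeat n K B⁻¹ :=
  inv_eq_right_inv <| by
    rw [← map_mul, mul_nonsing_inv B ((isUnit_iff_isUnit_det B).1 hB), map_one]

theorem stdSymp_eq_blockRepeat (n : ℕ) : stdSymp n = blockRepeat n ℝ !![0, -1; 1, 0] :=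
  eq_blockRepeat fun a b k l => by
    fin_cases a <;> fin_cases b <;> simp [stdSymp, Fin.ext_iff] <;>
      split_ifs <;> first | rfl | omega

theorem map_ofReal_stdSymp (n : ℕ) :
    (stdSymp n).map Complex.ofReal = blockRepeat n ℂ !![0, -1; 1, 0] := by
  rw [stdSymp_eq_blockRepeat, blockRepeat_map _ Complex.ofReal_zero]
  congr 1
  ext i j
  fin_cases i <;> fin_cases j <;> simp

theorem map_ofReal_Dplus_s9 (n : ℕ) (lam r : ℝ) :
    (Dplus n lam r).map Complex.ofReal =
      blockRepeat n ℂ ((Real.cosh (2 * r) : ℂ) • !![1, 0; 0, (lam : ℂ) ^ 2]) := by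
  rw [Dplus, diagonal_parity_eq_blockRepeat, ← blockRepeat_smul,
    blockRepeat_map _ Complex.ofReal_zero]
  congr 1
  ext i j
  fin_cases i <;> fin_cases j <;> simp

theorem map_ofReal_Dminus_s9 (n : ℕ) (lam r : ℝ) :
    (Dminus n lam r).map Complex.ofReal =
      blockRepeat n ℂ ((Real.sinh (2 * r) : ℂ) • !![1, 0; 0, -(lam : ℂ) ^ 2]) := by
  rw [Dminus, diagonal_parity_eq_blockRepeat, ← blockRepeat_smul,
    blockRepeat_map _ Complex.ofReal_zero]
  congr 1
  ext i j
  fin_cases i <;> fin_cases j <;> simp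

theorem schur_fin_two {K : Type*} [Field K] {c s l z : K} (hcs : c ^ 2 - s ^ 2 = 1)
    (hz : z ^ 2 = -l ^ 2) (hl : l ≠ 0) (hs : s ≠ 0) :
    IsUnit (c • !![1, 0; 0, l ^ 2] + z • !![0, -1; 1, 0]) ∧
      c • !![1, 0; 0, l ^ 2] - s • !![1, 0; 0, -l ^ 2] *
          (c • !![1, 0; 0, l ^ 2] + z • !![0, -1; 1, 0])⁻¹ * s • !![1, 0; 0, -l ^ 2] =
        -(z • !![0, -1; 1, 0]) := by
  -- the adjugate divided by the determinant `l² s²`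
  have hinv : (c • !![1, 0; 0, l ^ 2] + z • !![0, -1; 1, 0]) *
      ((l ^ 2 * s ^ 2)⁻¹ • !![c * l ^ 2, z; -z, c]) = 1 := by
    ext i j
    fin_cases i <;> fin_cases j <;> simp [Matrix.mul_apply] <;> grind
  refine ⟨(isUnit_iff_isUnit_det _).2 (isUnit_det_of_right_inverse hinv), ?_⟩
  rw [inv_eq_right_inv hinv]
  ext i j
  fin_cases i <;> fin_cases j <;> simp <;> grind

/-- For λ > 0 and r ≠ 0, the complex matrix D₊(r) + iλΣ is invertible and
D₊(r) − D₋(r)(D₊(r) + iλΣ)⁻¹D₋(r) = −iλΣ. -/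
theorem EPR_matrix_identity {n : ℕ} (lam r : ℝ) (hlam : 0 < lam) (hr : r ≠ 0) :
    IsUnit ((Dplus n lam r).map Complex.ofReal +
        (Complex.I * (lam : ℂ)) • (stdSymp n).map Complex.ofReal) ∧
    (Dplus n lam r).map Complex.ofReal -
        (Dminus n lam r).map Complex.ofReal *
          ((Dplus n lam r).map Complex.ofReal +
            (Complex.I * (lam : ℂ)) • (stdSymp n).map Complex.ofReal)⁻¹ *
          (Dminus n lam r).map Complex.ofReal =
      -((Complex.I * (lam : ℂ)) • (stdSymp n).map Complex.ofReal) := by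
  have hsinh : Real.sinh (2 * r) ≠ 0 := by simpa [Real.sinh_eq_zero] using hr
  obtain ⟨hunit, hschur⟩ := schur_fin_two (c := (Real.cosh (2 * r) : ℂ))
    (s := (Real.sinh (2 * r) : ℂ)) (l := (lam : ℂ)) (z := Complex.I * lam)
    (by exact_mod_cast Real.cosh_sq_sub_sinh_sq (2 * r))
    (by rw [mul_pow, Complex.I_sq, neg_one_mul]) (Complex.ofReal_ne_zero.2 hlam.ne')
    (Complex.ofReal_ne_zero.2 hsinh)
  rw [map_ofReal_Dplus_s9, map_ofReal_Dminus_s9, map_ofReal_stdSymp, ← blockRepeat_smul, ← map_add]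
  refine ⟨hunit.map _, ?_⟩
  rw [blockRepeat_nonsing_inv hunit, ← map_mul, ← map_mul, ← map_sub, hschur, map_neg]
end

section
/- Let f₁, f₂ : ℝⁿ → [0,∞) and ν : ℝⁿ → [0,∞) be measurable probability densities, and suppose there exists a measurable stochastic kernel density η : (ℝⁿ × ℝⁿ) × (ℝⁿ × ℝⁿ) → [0,∞) (with ∫η(w, x) dw = 1 for all x ∈ ℝⁿ×ℝⁿ) such that for both k = 1 and k = 2, the processed density of the input f_k⊗ν equals the clone f_k⊗f_k, i.e., ∫η((z₁,z₂), (z,z'))·f_k(z)ν(z') dz dz' = f_k(z₁)f_k(z₂) for almost every (z₁,z₂). Then ∫√(f₁(z)f₂(z)) dz ∈ {0, 1}; equivalently, either f₁·f₂ = 0 almost everywhere (the densities are disjoint) or f₁ = f₂ almost everywhere. -/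
/-!
The fidelity `F(a, b) = ∫ √a √b` of `ℝ≥0∞`-valued densities is at most `1` for
probability densities (Cauchy–Schwarz), multiplicative on product densities, and cannot decrease
under a stochastic kernel, because `√(η a) √(η b) = η √a √b` pointwise and Cauchy–Schwarz applies
to each output point. A kernel cloning both `f₁` and `f₂` therefore gives
`F = F(f₁ ⊗ ν, f₂ ⊗ ν) ≤ F(f₁ ⊗ f₁, f₂ ⊗ f₂) = F²`, which together with `F ≤ 1` forces
`F ∈ {0, 1}`. Fidelity `0` means `f₁ f₂ = 0` a.e., and fidelity `1` makes the Hellinger integral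
`∫ (√f₁ - √f₂)² = 2 - 2F` vanish.
-/

open MeasureTheory Function
open scoped ENNReal

theorem ENNReal.rpow_half_mul_rpow_half (x : ℝ≥0∞) : x ^ (1 / 2 : ℝ) * x ^ (1 / 2 : ℝ) = x := by
  rw [← ENNReal.rpow_add_of_nonneg _ _ (by norm_num) (by norm_num)]
  norm_num

theorem ENNReal.eq_zero_or_eq_one_of_le_mul_self {x : ℝ≥0∞} (h1 : x ≤ 1) (h : x ≤ x * x) :
    x = 0 ∨ x = 1 := by
  refine or_iff_not_imp_left.mpr fun h0 => ?_
  have hsq : x * x = x * 1 := by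
    rw [mul_one]
    exact le_antisymm (mul_le_of_le_one_right' h1) h
  exact (ENNReal.mul_right_inj h0 (ne_top_of_le_ne_top ENNReal.one_ne_top h1)).mp hsq

section Fidelity

variable {α β : Type*} [MeasurableSpace α] [MeasurableSpace β] {μ : Measure α} {ν : Measure β}

noncomputable def fidelity (μ : Measure α) (a b : α → ℝ≥0∞) : ℝ≥0∞ :=
  ∫⁻ x, a x ^ (1 / 2 : ℝ) * b x ^ (1 / 2 : ℝ) ∂μ

theorem fidelity_congr_ae {a a' b b' : α → ℝ≥0∞} (ha : a =ᵐ[μ] a') (hb : b =ᵐ[μ] b') :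
    fidelity μ a b = fidelity μ a' b' :=
  lintegral_congr_ae <| by filter_upwards [ha, hb] with x hax hbx; rw [hax, hbx]

theorem fidelity_self (a : α → ℝ≥0∞) : fidelity μ a a = ∫⁻ x, a x ∂μ := by
  simp only [fidelity, ENNReal.rpow_half_mul_rpow_half]

theorem fidelity_le_rpow_lintegral_mul_rpow_lintegral {a b : α → ℝ≥0∞} (ha : AEMeasurable a μ)
    (hb : AEMeasurable b μ) :
    fidelity μ a b ≤ (∫⁻ x, a x ∂μ) ^ (1 / 2 : ℝ) * (∫⁻ x, b x ∂μ) ^ (1 / 2 : ℝ) := by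
  have h := ENNReal.lintegral_mul_le_Lp_mul_Lq μ Real.HolderConjugate.two_two
    (ha.pow_const (1 / 2 : ℝ)) (hb.pow_const (1 / 2 : ℝ))
  simp only [Pi.mul_apply, ← ENNReal.rpow_mul] at h
  norm_num at h
  exact h

theorem fidelity_le_one {a b : α → ℝ≥0∞} (ha : AEMeasurable a μ) (hb : AEMeasurable b μ)
    (ha1 : ∫⁻ x, a x ∂μ = 1) (hb1 : ∫⁻ x, b x ∂μ = 1) : fidelity μ a b ≤ 1 := by
  simpa [ha1, hb1] using fidelity_le_rpow_lintegral_mul_rpow_lintegral ha hb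

theorem fidelity_prod [SFinite ν] {a b : α → ℝ≥0∞} {c d : β → ℝ≥0∞} (ha : AEMeasurable a μ)
    (hb : AEMeasurable b μ) (hc : AEMeasurable c ν) (hd : AEMeasurable d ν) :
    fidelity (μ.prod ν) (fun p => a p.1 * c p.2) (fun p => b p.1 * d p.2) =
      fidelity μ a b * fidelity ν c d := by
  have hsplit : ∀ p : α × β, (a p.1 * c p.2) ^ (1 / 2 : ℝ) * (b p.1 * d p.2) ^ (1 / 2 : ℝ) =
      a p.1 ^ (1 / 2 : ℝ) * b p.1 ^ (1 / 2 : ℝ) * (c p.2 ^ (1 / 2 : ℝ) * d p.2 ^ (1 / 2 : ℝ)) := by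
    intro p
    simp only [ENNReal.mul_rpow_of_nonneg _ _ (by norm_num : (0 : ℝ) ≤ 1 / 2)]
    ring
  simp only [fidelity, hsplit]
  exact lintegral_prod_mul ((ha.pow_const _).mul (hb.pow_const _))
    ((hc.pow_const _).mul (hd.pow_const _))

end Fidelity

section Kernel

variable {α β : Type*} [MeasurableSpace α] [MeasurableSpace β] {μ : Measure α} {ν : Measure β}
  [SFinite μ] [SFinite ν] {η : β → α → ℝ≥0∞}

noncomputable def applyKernel (η : β → α → ℝ≥0∞) (μ : Measure α) (a : α → ℝ≥0∞) : β → ℝ≥0∞ :=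
  fun w => ∫⁻ x, η w x * a x ∂μ

theorem measurable_applyKernel (hη : Measurable (uncurry η)) {a : α → ℝ≥0∞} (ha : Measurable a) :
    Measurable (applyKernel η μ a) :=
  (hη.mul (ha.comp measurable_snd)).lintegral_prod_right'

theorem lintegral_applyKernel (hη : Measurable (uncurry η)) (hη1 : ∀ x, ∫⁻ w, η w x ∂ν = 1)
    {a : α → ℝ≥0∞} (ha : Measurable a) :
    ∫⁻ w, applyKernel η μ a w ∂ν = ∫⁻ x, a x ∂μ := by
  unfold applyKernel
  rw [lintegral_lintegral_swap (hη.mul (ha.comp measurable_snd)).aemeasurable]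
  calc ∫⁻ x, ∫⁻ w, η w x * a x ∂ν ∂μ = ∫⁻ x, (∫⁻ w, η w x ∂ν) * a x ∂μ :=
        lintegral_congr fun x => lintegral_mul_const _ (hη.comp measurable_prodMk_right)
    _ = ∫⁻ x, a x ∂μ := by simp only [hη1, one_mul]

theorem fidelity_le_fidelity_applyKernel (hη : Measurable (uncurry η))
    (hη1 : ∀ x, ∫⁻ w, η w x ∂ν = 1) {a b : α → ℝ≥0∞} (ha : Measurable a) (hb : Measurable b) :
    fidelity μ a b ≤ fidelity ν (applyKernel η μ a) (applyKernel η μ b) := by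
  have hab : Measurable fun x => a x ^ (1 / 2 : ℝ) * b x ^ (1 / 2 : ℝ) :=
    (ha.pow_const _).mul (hb.pow_const _)
  rw [fidelity, ← lintegral_applyKernel hη hη1 hab]
  refine lintegral_mono fun w => ?_
  have hηw : Measurable (η w) := hη.comp measurable_prodMk_left
  calc applyKernel η μ (fun x => a x ^ (1 / 2 : ℝ) * b x ^ (1 / 2 : ℝ)) w
      = fidelity μ (fun x => η w x * a x) (fun x => η w x * b x) := by
        refine lintegral_congr fun x => ?_
        simp only [ENNReal.mul_rpow_of_nonneg _ _ (by norm_num : (0 : ℝ) ≤ 1 / 2)]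
        rw [mul_mul_mul_comm, ENNReal.rpow_half_mul_rpow_half]
    _ ≤ _ := fidelity_le_rpow_lintegral_mul_rpow_lintegral (hηw.mul ha).aemeasurable
        (hηw.mul hb).aemeasurable

end Kernel

theorem fidelity_eq_zero_or_one_of_clone {α : Type*} [MeasurableSpace α] {μ : Measure α}
    [SFinite μ] {a₁ a₂ c : α → ℝ≥0∞} (ha₁ : Measurable a₁) (ha₂ : Measurable a₂)
    (hc : Measurable c) (ha₁1 : ∫⁻ x, a₁ x ∂μ = 1) (ha₂1 : ∫⁻ x, a₂ x ∂μ = 1)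
    (hc1 : ∫⁻ x, c x ∂μ = 1) {η : α × α → α × α → ℝ≥0∞} (hη : Measurable (uncurry η))
    (hη1 : ∀ x, ∫⁻ w, η w x ∂μ.prod μ = 1)
    (hclone₁ : applyKernel η (μ.prod μ) (fun x => a₁ x.1 * c x.2) =ᵐ[μ.prod μ]
      fun w => a₁ w.1 * a₁ w.2)
    (hclone₂ : applyKernel η (μ.prod μ) (fun x => a₂ x.1 * c x.2) =ᵐ[μ.prod μ]
      fun w => a₂ w.1 * a₂ w.2) :
    fidelity μ a₁ a₂ = 0 ∨ fidelity μ a₁ a₂ = 1 := by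
  refine ENNReal.eq_zero_or_eq_one_of_le_mul_self
    (fidelity_le_one ha₁.aemeasurable ha₂.aemeasurable ha₁1 ha₂1) ?_
  calc fidelity μ a₁ a₂
      = fidelity (μ.prod μ) (fun x => a₁ x.1 * c x.2) (fun x => a₂ x.1 * c x.2) := by
        rw [fidelity_prod ha₁.aemeasurable ha₂.aemeasurable hc.aemeasurable hc.aemeasurable,
          fidelity_self, hc1, mul_one]
    _ ≤ fidelity (μ.prod μ) (applyKernel η (μ.prod μ) (fun x => a₁ x.1 * c x.2))
          (applyKernel η (μ.prod μ) (fun x => a₂ x.1 * c x.2)) :=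
        fidelity_le_fidelity_applyKernel hη hη1 (by fun_prop) (by fun_prop)
    _ = fidelity (μ.prod μ) (fun w => a₁ w.1 * a₁ w.2) (fun w => a₂ w.1 * a₂ w.2) :=
        fidelity_congr_ae hclone₁ hclone₂
    _ = fidelity μ a₁ a₂ * fidelity μ a₁ a₂ :=
        fidelity_prod ha₁.aemeasurable ha₂.aemeasurable ha₁.aemeasurable ha₂.aemeasurable

theorem Real.add_sub_two_mul_sqrt_mul {a b : ℝ} (ha : 0 ≤ a) (hb : 0 ≤ b) :
    a + b - 2 * √(a * b) = (√a - √b) ^ 2 := by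
  rw [Real.sqrt_mul ha, sub_sq, Real.sq_sqrt ha, Real.sq_sqrt hb]
  ring

theorem ENNReal.ofReal_sqrt_mul {a b : ℝ} (ha : 0 ≤ a) (hb : 0 ≤ b) :
    ENNReal.ofReal √(a * b) = ENNReal.ofReal a ^ (1 / 2 : ℝ) * ENNReal.ofReal b ^ (1 / 2 : ℝ) := by
  rw [Real.sqrt_mul ha, ENNReal.ofReal_mul (Real.sqrt_nonneg a), Real.sqrt_eq_rpow,
    Real.sqrt_eq_rpow, ENNReal.ofReal_rpow_of_nonneg ha (by norm_num),
    ENNReal.ofReal_rpow_of_nonneg hb (by norm_num)]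

section RealDensities

variable {α β : Type*} [MeasurableSpace α] [MeasurableSpace β] {μ : Measure α} {ν : Measure β}

theorem lintegral_ofReal_eq_one {f : α → ℝ} (hf0 : 0 ≤ᵐ[μ] f) (hf1 : ∫ x, f x ∂μ = 1) :
    ∫⁻ x, ENNReal.ofReal (f x) ∂μ = 1 := by
  rw [← ofReal_integral_eq_lintegral_ofReal (integrable_of_integral_eq_one hf1) hf0, hf1,
    ENNReal.ofReal_one]

theorem integral_sqrt_mul_eq_toReal_fidelity {f g : α → ℝ} (hf : Measurable f) (hg : Measurable g)
    (hf0 : ∀ x, 0 ≤ f x) (hg0 : ∀ x, 0 ≤ g x) :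
    ∫ x, √(f x * g x) ∂μ =
      (fidelity μ (fun x => ENNReal.ofReal (f x)) (fun x => ENNReal.ofReal (g x))).toReal := by
  rw [integral_eq_lintegral_of_nonneg_ae (f := fun x => √(f x * g x))
    (ae_of_all _ fun x => Real.sqrt_nonneg _)
    (hf.mul hg).sqrt.aestronglyMeasurable, fidelity]
  simp only [ENNReal.ofReal_sqrt_mul (hf0 _) (hg0 _)]

theorem mul_ae_eq_zero_of_fidelity_eq_zero {f g : α → ℝ} (hf : Measurable f) (hg : Measurable g)
    (hf0 : ∀ x, 0 ≤ f x) (hg0 : ∀ x, 0 ≤ g x)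
    (h : fidelity μ (fun x => ENNReal.ofReal (f x)) (fun x => ENNReal.ofReal (g x)) = 0) :
    (fun x => f x * g x) =ᵐ[μ] fun _ => 0 := by
  simp only [fidelity, ← ENNReal.ofReal_sqrt_mul (hf0 _) (hg0 _)] at h
  filter_upwards [(lintegral_eq_zero_iff (hf.mul hg).sqrt.ennreal_ofReal).mp h] with x hx
  have hsqrt : √(f x * g x) = 0 := le_antisymm (ENNReal.ofReal_eq_zero.mp hx) (Real.sqrt_nonneg _)
  exact (Real.sqrt_eq_zero (mul_nonneg (hf0 x) (hg0 x))).mp hsqrt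

theorem ae_eq_of_integral_sqrt_mul_eq_one {f g : α → ℝ} (hf0 : ∀ x, 0 ≤ f x) (hg0 : ∀ x, 0 ≤ g x)
    (hf1 : ∫ x, f x ∂μ = 1) (hg1 : ∫ x, g x ∂μ = 1) (hfg : ∫ x, √(f x * g x) ∂μ = 1) :
    f =ᵐ[μ] g := by
  have hf := integrable_of_integral_eq_one hf1
  have hg := integrable_of_integral_eq_one hg1
  have hsqrt : Integrable (fun x => √(f x * g x)) μ := by
    refine (hf.add hg).mono' (Real.continuous_sqrt.comp_aestronglyMeasurable (hf.1.mul hg.1))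
      (ae_of_all _ fun x => ?_)
    rw [Real.norm_of_nonneg (Real.sqrt_nonneg _), Pi.add_apply]
    nlinarith [Real.add_sub_two_mul_sqrt_mul (hf0 x) (hg0 x), sq_nonneg (√(f x) - √(g x)),
      Real.sqrt_nonneg (f x * g x)]
  have hsum : Integrable (fun x => f x + g x) μ := hf.add hg
  have hzero : ∫ x, f x + g x - 2 * √(f x * g x) ∂μ = 0 := by
    rw [integral_sub hsum (hsqrt.const_mul 2), integral_add hf hg, integral_const_mul,
      hf1, hg1, hfg]
    norm_num
  have hnonneg : 0 ≤ fun x => f x + g x - 2 * √(f x * g x) := fun x => by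
    dsimp only [Pi.zero_apply]
    rw [Real.add_sub_two_mul_sqrt_mul (hf0 x) (hg0 x)]
    positivity
  filter_upwards [(integral_eq_zero_iff_of_nonneg hnonneg
    (hsum.sub (hsqrt.const_mul 2))).mp hzero] with x hx
  rw [Pi.zero_apply, Real.add_sub_two_mul_sqrt_mul (hf0 x) (hg0 x), sq_eq_zero_iff, sub_eq_zero,
    Real.sqrt_inj (hf0 x) (hg0 x)] at hx
  exact hx

theorem applyKernel_ofReal_ae_eq [SFinite μ] [SFinite ν] {η : β → α → ℝ}
    (hη : Measurable (uncurry η)) (hη0 : ∀ w x, 0 ≤ η w x) (hη1 : ∀ x, ∫ w, η w x ∂ν = 1)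
    {p : α → ℝ} (hp : Measurable p) (hp0 : ∀ x, 0 ≤ p x) (hp1 : ∫ x, p x ∂μ = 1) {q : β → ℝ}
    (h : (fun w => ∫ x, η w x * p x ∂μ) =ᵐ[ν] q) :
    applyKernel (fun w x => ENNReal.ofReal (η w x)) μ (fun x => ENNReal.ofReal (p x)) =ᵐ[ν]
      fun w => ENNReal.ofReal (q w) := by
  have hηe : Measurable (uncurry fun w x => ENNReal.ofReal (η w x)) := hη.ennreal_ofReal
  have hηe1 : ∀ x, ∫⁻ w, ENNReal.ofReal (η w x) ∂ν = 1 :=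
    fun x => lintegral_ofReal_eq_one (ae_of_all _ (hη0 · x)) (hη1 x)
  have hfin : ∀ᵐ w ∂ν, applyKernel (fun w x => ENNReal.ofReal (η w x)) μ
      (fun x => ENNReal.ofReal (p x)) w ≠ ∞ := by
    refine (ae_lt_top (measurable_applyKernel hηe hp.ennreal_ofReal) ?_).mono fun w => ne_of_lt
    rw [lintegral_applyKernel hηe hηe1 hp.ennreal_ofReal,
      lintegral_ofReal_eq_one (ae_of_all _ hp0) hp1]
    exact ENNReal.one_ne_top
  filter_upwards [h, hfin] with w hw hw_fin
  rw [← hw, integral_eq_lintegral_of_nonneg_ae (f := fun x => η w x * p x)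
    (ae_of_all _ fun x => mul_nonneg (hη0 w x) (hp0 x))
    ((hη.comp measurable_prodMk_left).mul hp).aestronglyMeasurable]
  simp only [ENNReal.ofReal_mul (hη0 w _)]
  exact (ENNReal.ofReal_toReal hw_fin).symm

end RealDensities

theorem applyKernel_ofReal_prod_ae_eq {α : Type*} [MeasurableSpace α] {μ : Measure α} [SFinite μ]
    {η : α × α → α × α → ℝ} (hη : Measurable (uncurry η)) (hη0 : ∀ w x, 0 ≤ η w x)
    (hη1 : ∀ x, ∫ w, η w x ∂μ.prod μ = 1) {f c : α → ℝ} (hf : Measurable f) (hc : Measurable c)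
    (hf0 : ∀ z, 0 ≤ f z) (hc0 : ∀ z, 0 ≤ c z) (hf1 : ∫ z, f z ∂μ = 1) (hc1 : ∫ z, c z ∂μ = 1)
    (hclone : (fun w => ∫ x, η w x * (f x.1 * c x.2) ∂μ.prod μ) =ᵐ[μ.prod μ]
      fun w => f w.1 * f w.2) :
    applyKernel (fun w x => ENNReal.ofReal (η w x)) (μ.prod μ)
        (fun x => ENNReal.ofReal (f x.1) * ENNReal.ofReal (c x.2)) =ᵐ[μ.prod μ]
      fun w => ENNReal.ofReal (f w.1) * ENNReal.ofReal (f w.2) := by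
  have hfc1 : ∫ x, f x.1 * c x.2 ∂μ.prod μ = 1 := by rw [integral_prod_mul, hf1, hc1, one_mul]
  simpa only [ENNReal.ofReal_mul (hf0 _)] using applyKernel_ofReal_ae_eq hη hη0 hη1
    (by fun_prop) (fun x => mul_nonneg (hf0 x.1) (hc0 x.2)) hfc1 hclone

/-- Classical no-cloning theorem: if a stochastic kernel η clones each of two
probability densities f₁, f₂ (taking f_k⊗ν to f_k⊗f_k), then their fidelity is 0 or 1;
equivalently, the densities are disjoint a.e. or equal a.e. -/
theorem classical_no_cloning {n : ℕ}
    (f₁ f₂ ν : (Fin n → ℝ) → ℝ)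
    (hf₁m : Measurable f₁) (hf₂m : Measurable f₂) (hνm : Measurable ν)
    (hf₁0 : ∀ z, 0 ≤ f₁ z) (hf₂0 : ∀ z, 0 ≤ f₂ z) (hν0 : ∀ z, 0 ≤ ν z)
    (hf₁1 : ∫ z, f₁ z = 1) (hf₂1 : ∫ z, f₂ z = 1) (hν1 : ∫ z, ν z = 1)
    (η : ((Fin n → ℝ) × (Fin n → ℝ)) → ((Fin n → ℝ) × (Fin n → ℝ)) → ℝ)
    (hηm : Measurable (Function.uncurry η))
    (hη0 : ∀ w x, 0 ≤ η w x) (hη1 : ∀ x, ∫ w, η w x = 1)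
    (hclone₁ : (fun w : (Fin n → ℝ) × (Fin n → ℝ) =>
        ∫ x : (Fin n → ℝ) × (Fin n → ℝ), η w x * (f₁ x.1 * ν x.2)) =ᵐ[volume]
      (fun w => f₁ w.1 * f₁ w.2))
    (hclone₂ : (fun w : (Fin n → ℝ) × (Fin n → ℝ) =>
        ∫ x : (Fin n → ℝ) × (Fin n → ℝ), η w x * (f₂ x.1 * ν x.2)) =ᵐ[volume]
      (fun w => f₂ w.1 * f₂ w.2)) :
    ((∫ z, Real.sqrt (f₁ z * f₂ z)) = 0 ∨ (∫ z, Real.sqrt (f₁ z * f₂ z)) = 1) ∧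
    ((fun z => f₁ z * f₂ z) =ᵐ[volume] (fun _ => (0 : ℝ)) ∨ f₁ =ᵐ[volume] f₂) := by
  have hfidelity := fidelity_eq_zero_or_one_of_clone (μ := volume)
    (η := fun w x => ENNReal.ofReal (η w x)) hf₁m.ennreal_ofReal
    hf₂m.ennreal_ofReal hνm.ennreal_ofReal (lintegral_ofReal_eq_one (ae_of_all _ hf₁0) hf₁1)
    (lintegral_ofReal_eq_one (ae_of_all _ hf₂0) hf₂1)
    (lintegral_ofReal_eq_one (ae_of_all _ hν0) hν1) hηm.ennreal_ofReal
    (fun x => lintegral_ofReal_eq_one (ae_of_all _ (hη0 · x)) (hη1 x))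
    (applyKernel_ofReal_prod_ae_eq hηm hη0 hη1 hf₁m hνm hf₁0 hν0 hf₁1 hν1 hclone₁)
    (applyKernel_ofReal_prod_ae_eq hηm hη0 hη1 hf₂m hνm hf₂0 hν0 hf₂1 hν1 hclone₂)
  have hintegral := integral_sqrt_mul_eq_toReal_fidelity (μ := volume) hf₁m hf₂m hf₁0 hf₂0
  rcases hfidelity with h0 | h1
  · rw [h0, ENNReal.toReal_zero] at hintegral
    exact ⟨Or.inl hintegral, Or.inl (mul_ae_eq_zero_of_fidelity_eq_zero hf₁m hf₂m hf₁0 hf₂0 h0)⟩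
  · rw [h1, ENNReal.toReal_one] at hintegral
    exact ⟨Or.inr hintegral,
      Or.inr (ae_eq_of_integral_sqrt_mul_eq_one hf₁0 hf₂0 hf₁1 hf₂1 hintegral)⟩
end
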